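/- Consider the discrete weighted stochastic block model with two communities A and B of size n (within-community distribution p_n, between-community distribution q_n on {0, ..., L}, all edge weights independent). Let d_n(ℓ) = log(p_n(ℓ)/q_n(ℓ)), let M be a constant with M ≥ max_ℓ d_n(ℓ) for all n, and for a node i and a vertex set H let S(i, H) = Σ_{j ∈ H, j ≠ i} d_n(w_{ij}). Define the events F = {the maximum likelihood estimator fails}, F_A = {∃ i ∈ A : S(i, A \ {i}) < S(i, B) − M}, and F_B = {∃ j ∈ B : S(j, B \ {j}) < S(j, A) − M}. If P(F_A) ≥ 2/3, then P(F) ≥ 1/3. -/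

import Mathlib

/-!
STATEMENT 14: In the discrete weighted stochastic block model with two communities `A`,
`B` of size `n` over the alphabet `{0, …, L}`, with `d_n(ℓ) = log(p_n(ℓ)/q_n(ℓ))`,
`M ≥ max_ℓ d_n(ℓ)`, and `S(i, H) = ∑_{j ∈ H, j ≠ i} d_n(w_ij)`: if
`P(F_A) ≥ 2/3`, where `F_A = {∃ i ∈ A : S(i, A \ {i}) < S(i, B) − M}`, then the
maximum likelihood estimator fails with probability at least `1/3`.
-/

open MeasureTheory Filter
open scoped ENNReal

namespace SBM14

/-- Real mass function on the color alphabet `{0, …, L}` with parameter vector `c`. -/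
noncomputable def mass (L : ℕ) (c : Fin L → ℝ) (n : ℕ) : Fin (L + 1) → ℝ :=
  Fin.cases (1 - (∑ j, c j) * Real.log n / n) fun j => c j * Real.log n / n

/-- The corresponding distribution on the color alphabet. -/
noncomputable def colDist (L : ℕ) (c : Fin L → ℝ) (n : ℕ) : Measure (Fin (L + 1)) :=
  ∑ ℓ : Fin (L + 1), ENNReal.ofReal (mass L c n ℓ) • Measure.dirac ℓ

/-- Edges of the complete graph on the `2 n` vertices. -/
abbrev Edge (n : ℕ) := {e : Fin (2 * n) × Fin (2 * n) // e.1 < e.2}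

/-- The ground-truth community assignment. -/
def truth (n : ℕ) (i : Fin (2 * n)) : Bool := decide (i.val < n)

/-- The first community `A`. -/
def comA (n : ℕ) : Finset (Fin (2 * n)) := Finset.univ.filter fun i => i.val < n

/-- The second community `B`. -/
def comB (n : ℕ) : Finset (Fin (2 * n)) := Finset.univ.filter fun i => ¬ i.val < n

/-- Distribution of the color of one edge. -/
noncomputable def edgeMeasure (n L : ℕ) (a b : Fin L → ℝ) (e : Edge n) :
    Measure (Fin (L + 1)) :=
  if truth n e.1.1 = truth n e.1.2 then colDist L a n else colDist L b n

/-- The law of the colored random graph: all edge colors independent. -/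
noncomputable def sbm (n L : ℕ) (a b : Fin L → ℝ) : Measure (Edge n → Fin (L + 1)) :=
  Measure.pi (edgeMeasure n L a b)

/-- The color of the (unordered) edge `{i, j}`. -/
def wfun {n : ℕ} {L : ℕ} (w : Edge n → Fin (L + 1)) (i j : Fin (2 * n)) : Fin (L + 1) :=
  if h : i < j then w ⟨(i, j), h⟩ else if h' : j < i then w ⟨(j, i), h'⟩ else 0

/-- Likelihood of the observed colors `w` under the assignment `σ`. -/
noncomputable def likelihood (n L : ℕ) (a b : Fin L → ℝ) (σ : Fin (2 * n) → Bool)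
    (w : Edge n → Fin (L + 1)) : ℝ≥0∞ :=
  ∏ e : Edge n,
    if σ e.1.1 = σ e.1.2 then ENNReal.ofReal (mass L a n (w e))
    else ENNReal.ofReal (mass L b n (w e))

/-- A community assignment is balanced if each community has exactly `n` nodes. -/
def balanced (n : ℕ) (σ : Fin (2 * n) → Bool) : Prop :=
  (Finset.univ.filter fun i => σ i = true).card = n

/-- `σ` coincides with the true partition, up to swapping the two labels. -/
def equivTruth (n : ℕ) (σ : Fin (2 * n) → Bool) : Prop :=
  σ = truth n ∨ σ = fun i => !(truth n i)

/-- The log-likelihood ratio `d_n(ℓ) = log (p_n(ℓ) / q_n(ℓ))` of a single color. -/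
noncomputable def d (n L : ℕ) (a b : Fin L → ℝ) (ℓ : Fin (L + 1)) : ℝ :=
  Real.log (mass L a n ℓ / mass L b n ℓ)

/-- `S(i, H) = ∑_{j ∈ H, j ≠ i} d_n(w_ij)`. -/
noncomputable def S (n L : ℕ) (a b : Fin L → ℝ) (w : Edge n → Fin (L + 1))
    (i : Fin (2 * n)) (H : Finset (Fin (2 * n))) : ℝ :=
  ∑ j ∈ H.erase i, d n L a b (wfun w i j)

/-- Failure event of maximum likelihood: some balanced assignment not coinciding with
the truth is strictly more likely than the truth. -/
def failEvent (n L : ℕ) (a b : Fin L → ℝ) : Set (Edge n → Fin (L + 1)) :=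
  {w | ∃ σ, balanced n σ ∧ ¬ equivTruth n σ ∧
    likelihood n L a b (truth n) w < likelihood n L a b σ w}

/-- The event `F_A`: some node of `A` is better connected to `B` than to `A`. -/
def eventFA (n L : ℕ) (a b : Fin L → ℝ) (M : ℝ) : Set (Edge n → Fin (L + 1)) :=
  {w | ∃ i ∈ comA n, S n L a b w i ((comA n).erase i) < S n L a b w i (comB n) - M}

/-!
The reflection `i ↦ 2n - 1 - i` of the vertex set exchanges the two communities and preserves
the law of the graph, so `P(F_B) = P(F_A) ≥ 2/3` and hence `P(F_A ∩ F_B) ≥ 1/3`.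
On `F_A ∩ F_B` take witnesses `i ∈ A`, `j ∈ B` and exchange them. Only edges at `i` or `j`
change between "within" and "between", so the log-likelihood gain is
`S(i, B \ {j}) + S(j, A \ {i}) - S(i, A \ {i}) - S(j, B \ {j})`, which is positive because
`S(i, B) ≤ S(i, B \ {j}) + M` and `S(j, A) ≤ S(j, A \ {i}) + M`. The new partition is balanced
and, since `F_A` is empty for `n = 1`, it differs from the truth: the MLE fails.
-/

section PairSums

variable {V : Type*} [Fintype V] [LinearOrder V]

lemma two_mul_sum_lt_pairs (g : V → V → ℝ) (hsym : ∀ k m, g k m = g m k)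
    (hdiag : ∀ k, g k k = 0) :
    2 * ∑ e : {p : V × V // p.1 < p.2}, g e.1.1 e.1.2 = ∑ k, ∑ m, g k m := by
  have hsplit (k m : V) : g k m = (if k < m then g k m else 0) + if m < k then g m k else 0 := by
    rcases lt_trichotomy k m with h | rfl | h
    · simp [h, h.not_gt]
    · simp [hdiag]
    · simp [h, h.not_gt, hsym k m]
  have hlt : ∑ e : {p : V × V // p.1 < p.2}, g e.1.1 e.1.2 =
      ∑ k, ∑ m, if k < m then g k m else 0 := by
    rw [← Finset.sum_subtype (Finset.univ.filter fun p : V × V => p.1 < p.2) (by simp)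
      (fun p => g p.1 p.2), Finset.sum_filter, Fintype.sum_prod_type]
  calc 2 * ∑ e : {p : V × V // p.1 < p.2}, g e.1.1 e.1.2
      = ∑ k, ∑ m, ((if k < m then g k m else 0) + if m < k then g m k else 0) := by
        rw [two_mul, hlt]
        nth_rw 2 [Finset.sum_comm]
        simp only [Finset.sum_add_distrib]
    _ = ∑ k, ∑ m, g k m := by simp only [← hsplit]

lemma sum_lt_pairs_eq_of_support (g : V → V → ℝ) (hsym : ∀ k m, g k m = g m k)
    (hdiag : ∀ k, g k k = 0) {i j : V} (hij : i ≠ j) (hgij : g i j = 0)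
    (hout : ∀ k m, k ≠ i → k ≠ j → m ≠ i → m ≠ j → g k m = 0) :
    ∑ e : {p : V × V // p.1 < p.2}, g e.1.1 e.1.2 = ∑ m, g i m + ∑ m, g j m := by
  have hdecomp (k m : V) : g k m = ((if k = i then g i m else 0) + (if k = j then g j m else 0))
      + ((if m = i then g i k else 0) + (if m = j then g j k else 0)) := by
    by_cases hki : k = i <;> by_cases hkj : k = j <;> by_cases hmi : m = i <;>
      by_cases hmj : m = j <;> subst_vars <;> simp_all
  have hsum : ∑ k, ∑ m, g k m = 2 * (∑ m, g i m + ∑ m, g j m) := by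
    rw [Finset.sum_congr rfl fun k _ => Finset.sum_congr rfl fun m _ => hdecomp k m]
    simp only [Finset.sum_add_distrib, Finset.sum_ite_irrel, Finset.sum_const_zero,
      Finset.sum_ite_eq', Finset.mem_univ, if_true]
    ring
  linarith [two_mul_sum_lt_pairs g hsym hdiag]

end PairSums

lemma add_sub_one_le_measureReal_inter {Ω : Type*} [MeasurableSpace Ω] {μ : Measure Ω}
    [IsProbabilityMeasure μ] {s t : Set Ω} (ht : MeasurableSet t) :
    μ.real s + μ.real t - 1 ≤ μ.real (s ∩ t) := by
  linarith [measureReal_union_add_inter (μ := μ) (s := s) ht,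
    measureReal_le_one (μ := μ) (s := s ∪ t)]

section Mass

variable {L n : ℕ} {c : Fin L → ℝ}

lemma mass_pos (hc : ∀ ℓ, 0 < c ℓ) (hn : 2 ≤ n) (hcn : (∑ ℓ, c ℓ) * Real.log n < n)
    (ℓ : Fin (L + 1)) : 0 < mass L c n ℓ := by
  have hn0 : (0 : ℝ) < n := by positivity
  induction ℓ using Fin.cases with
  | zero => simpa [mass, sub_pos, div_lt_one hn0] using hcn
  | succ ℓ => exact div_pos (mul_pos (hc ℓ) (Real.log_pos (by exact_mod_cast hn))) hn0

lemma sum_mass : ∑ ℓ, mass L c n ℓ = 1 := by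
  simp only [Fin.sum_univ_succ, mass, Fin.cases_zero, Fin.cases_succ, ← Finset.sum_div,
    ← Finset.sum_mul]
  ring

lemma isProbabilityMeasure_colDist (hc : ∀ ℓ, 0 ≤ mass L c n ℓ) :
    IsProbabilityMeasure (colDist L c n) := by
  constructor
  simp [colDist, ← ENNReal.ofReal_sum_of_nonneg fun ℓ _ => hc ℓ, sum_mass]

instance : IsFiniteMeasure (colDist L c n) := by
  constructor
  simp [colDist, ENNReal.sum_lt_top]

end Mass

section Model

variable {n L : ℕ} {a b : Fin L → ℝ}

instance (e : Edge n) : IsFiniteMeasure (edgeMeasure n L a b e) := by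
  unfold edgeMeasure; split <;> infer_instance

lemma isProbabilityMeasure_sbm (hp : ∀ ℓ, 0 ≤ mass L a n ℓ)
    (hq : ∀ ℓ, 0 ≤ mass L b n ℓ) :
    IsProbabilityMeasure (sbm n L a b) := by
  have (e : Edge n) : IsProbabilityMeasure (edgeMeasure n L a b e) := by
    unfold edgeMeasure; split
    exacts [isProbabilityMeasure_colDist hp, isProbabilityMeasure_colDist hq]
  unfold sbm; infer_instance

lemma mem_comA {i : Fin (2 * n)} : i ∈ comA n ↔ truth n i = true := by simp [comA, truth]

lemma mem_comB {i : Fin (2 * n)} : i ∈ comB n ↔ truth n i = false := by simp [comB, truth]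

lemma rev_mem_comA {i : Fin (2 * n)} : i.rev ∈ comA n ↔ i ∈ comB n := by
  simp only [comA, comB, Finset.mem_filter, Finset.mem_univ, true_and, Fin.val_rev]; omega

lemma rev_mem_comB {i : Fin (2 * n)} : i.rev ∈ comB n ↔ i ∈ comA n := by
  simp only [comA, comB, Finset.mem_filter, Finset.mem_univ, true_and, Fin.val_rev]; omega

lemma card_comA : (comA n).card = n := by
  rw [comA, Fin.card_filter_val_lt]; omega

lemma card_comB : (comB n).card = n := by
  have := Finset.card_filter_add_card_filter_not (s := Finset.univ)
    (fun i : Fin (2 * n) => i.val < n)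
  rw [← comA, ← comB, card_comA, Finset.card_univ, Fintype.card_fin] at this
  omega

lemma wfun_comm (w : Edge n → Fin (L + 1)) (i j : Fin (2 * n)) : wfun w i j = wfun w j i := by
  rcases lt_trichotomy i j with h | rfl | h
  · simp [wfun, h, h.not_gt]
  · rfl
  · simp [wfun, h, h.not_gt]

lemma wfun_edge (w : Edge n → Fin (L + 1)) (e : Edge n) : wfun w e.1.1 e.1.2 = w e := dif_pos e.2

end Model

def eventFB (n L : ℕ) (a b : Fin L → ℝ) (M : ℝ) : Set (Edge n → Fin (L + 1)) :=
  {w | ∃ j ∈ comB n, S n L a b w j ((comB n).erase j) < S n L a b w j (comA n) - M}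

section Reflection

variable {n L : ℕ} {a b : Fin L → ℝ}

def Edge.rev (e : Edge n) : Edge n := ⟨(e.1.2.rev, e.1.1.rev), Fin.rev_lt_rev.2 e.2⟩

lemma Edge.rev_involutive : Function.Involutive (Edge.rev (n := n)) := fun e => by
  simp [Edge.rev]

lemma wfun_comp_rev (w : Edge n → Fin (L + 1)) (i j : Fin (2 * n)) :
    wfun (w ∘ Edge.rev) i j = wfun w i.rev j.rev := by
  rcases lt_trichotomy i j with h | rfl | h
  · simp [wfun, h, Edge.rev, Fin.rev_lt_rev.2 h, (Fin.rev_lt_rev.2 h).not_gt]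
  · simp [wfun]
  · simp [wfun, h, h.not_gt, Edge.rev, Fin.rev_lt_rev.2 h]

lemma truth_rev (i : Fin (2 * n)) : truth n i.rev = !truth n i := by
  simp only [truth, Fin.val_rev]
  by_cases h : i.val < n <;> simp [h] <;> omega

lemma edgeMeasure_rev (e : Edge n) : edgeMeasure n L a b e.rev = edgeMeasure n L a b e := by
  simp only [edgeMeasure, Edge.rev, truth_rev, Bool.not_inj_iff, eq_comm]

lemma measurePreserving_comp_rev :
    MeasurePreserving (fun w : Edge n → Fin (L + 1) => w ∘ Edge.rev) (sbm n L a b)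
      (sbm n L a b) := by
  have h := measurePreserving_piCongrLeft (edgeMeasure n L a b) Edge.rev_involutive.toPerm
  simp only [Function.Involutive.coe_toPerm, edgeMeasure_rev] at h
  unfold sbm
  convert h using 1
  funext w e
  conv_rhs => rw [← Edge.rev_involutive e]
  rw [MeasurableEquiv.coe_piCongrLeft]
  exact (Equiv.piCongrLeft_apply_apply (fun _ => Fin (L + 1)) _ w e.rev).symm

lemma S_comp_rev (w : Edge n → Fin (L + 1)) (k : Fin (2 * n)) {H H' : Finset (Fin (2 * n))}
    (hH : ∀ m, m ∈ H' ↔ m.rev ∈ H) :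
    S n L a b (w ∘ Edge.rev) k H = S n L a b w k.rev H' := by
  refine Finset.sum_nbij' Fin.rev Fin.rev (fun m hm => ?_) (fun m hm => ?_) (by simp) (by simp)
    (fun m _ => by rw [wfun_comp_rev])
  · simp_all [Fin.rev_inj]
  · simp_all [Fin.rev_eq_iff]

lemma preimage_comp_rev_eventFA (M : ℝ) :
    (fun w : Edge n → Fin (L + 1) => w ∘ Edge.rev) ⁻¹' eventFA n L a b M =
      eventFB n L a b M := by
  ext w
  constructor
  · rintro ⟨i, hi, hlt⟩
    refine ⟨i.rev, rev_mem_comB.2 hi, ?_⟩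
    rwa [S_comp_rev w i (H' := (comB n).erase i.rev), S_comp_rev w i (H' := comA n)] at hlt
    · simp [rev_mem_comB]
    · simp [Fin.rev_eq_iff, rev_mem_comA]
  · rintro ⟨j, hj, hlt⟩
    refine ⟨j.rev, rev_mem_comA.2 hj, ?_⟩
    rwa [S_comp_rev w j.rev (H' := (comB n).erase j), S_comp_rev w j.rev (H' := comA n),
      Fin.rev_rev]
    · simp [rev_mem_comB]
    · simp [Fin.rev_eq_iff, rev_mem_comA]

lemma sbm_eventFB (M : ℝ) :
    sbm n L a b (eventFB n L a b M) = sbm n L a b (eventFA n L a b M) := by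
  rw [← preimage_comp_rev_eventFA]
  exact measurePreserving_comp_rev.measure_preimage MeasurableSet.of_discrete.nullMeasurableSet

end Reflection

section Likelihood

variable {n L : ℕ} {a b : Fin L → ℝ}

noncomputable def logLikelihood (n L : ℕ) (a b : Fin L → ℝ) (σ : Fin (2 * n) → Bool)
    (w : Edge n → Fin (L + 1)) : ℝ :=
  ∑ e : Edge n, Real.log (if σ e.1.1 = σ e.1.2 then mass L a n (w e) else mass L b n (w e))

noncomputable def withinScore (n L : ℕ) (a b : Fin L → ℝ) (σ : Fin (2 * n) → Bool)
    (w : Edge n → Fin (L + 1)) (k m : Fin (2 * n)) : ℝ :=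
  if σ k = σ m then d n L a b (wfun w k m) else 0

lemma withinScore_comm (σ : Fin (2 * n) → Bool) (w : Edge n → Fin (L + 1))
    (k m : Fin (2 * n)) :
    withinScore n L a b σ w k m = withinScore n L a b σ w m k := by
  simp only [withinScore, wfun_comm w k m, eq_comm]

lemma sum_withinScore (σ : Fin (2 * n) → Bool) (w : Edge n → Fin (L + 1)) (k : Fin (2 * n))
    {H : Finset (Fin (2 * n))} (hH : ∀ m ≠ k, σ k = σ m ↔ m ∈ H) :
    ∑ m, withinScore n L a b σ w k m = d n L a b (wfun w k k) + S n L a b w k H := by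
  have hk : k ∈ Finset.univ.filter fun m => σ k = σ m := by simp
  simp only [withinScore]
  rw [← Finset.sum_filter, ← Finset.add_sum_erase _ _ hk, S]
  congr 2
  ext m
  by_cases hm : m = k <;> simp [hm, hH]

lemma S_eq_add_S_erase (w : Edge n → Fin (L + 1)) {k j : Fin (2 * n)} {H : Finset (Fin (2 * n))}
    (hj : j ∈ H) (hjk : j ≠ k) :
    S n L a b w k H = d n L a b (wfun w k j) + S n L a b w k (H.erase j) := by
  rw [S, S, Finset.erase_right_comm]
  exact (Finset.add_sum_erase _ _ (Finset.mem_erase.2 ⟨hjk, hj⟩)).symm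

variable (hp : ∀ ℓ, 0 < mass L a n ℓ) (hq : ∀ ℓ, 0 < mass L b n ℓ)
include hp hq

lemma likelihood_eq_ofReal_exp (σ : Fin (2 * n) → Bool) (w : Edge n → Fin (L + 1)) :
    likelihood n L a b σ w = ENNReal.ofReal (Real.exp (logLikelihood n L a b σ w)) := by
  rw [logLikelihood, Real.exp_sum, ENNReal.ofReal_prod_of_nonneg fun e _ => (Real.exp_pos _).le]
  refine Finset.prod_congr rfl fun e _ => ?_
  split_ifs
  · rw [Real.exp_log (hp _)]
  · rw [Real.exp_log (hq _)]

lemma likelihood_lt_likelihood_iff (σ τ : Fin (2 * n) → Bool) (w : Edge n → Fin (L + 1)) :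
    likelihood n L a b τ w < likelihood n L a b σ w ↔
      logLikelihood n L a b τ w < logLikelihood n L a b σ w := by
  rw [likelihood_eq_ofReal_exp hp hq, likelihood_eq_ofReal_exp hp hq,
    ENNReal.ofReal_lt_ofReal_iff (Real.exp_pos _), Real.exp_lt_exp]

lemma logLikelihood_sub_logLikelihood (σ τ : Fin (2 * n) → Bool) (w : Edge n → Fin (L + 1)) :
    logLikelihood n L a b σ w - logLikelihood n L a b τ w =
      ∑ e : Edge n,
        (withinScore n L a b σ w e.1.1 e.1.2 - withinScore n L a b τ w e.1.1 e.1.2) := by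
  rw [logLikelihood, logLikelihood, ← Finset.sum_sub_distrib]
  refine Finset.sum_congr rfl fun e _ => ?_
  have hd : d n L a b (w e) = Real.log (mass L a n (w e)) - Real.log (mass L b n (w e)) :=
    Real.log_div (hp _).ne' (hq _).ne'
  simp only [withinScore, wfun_edge]
  split_ifs <;> linarith

lemma logLikelihood_swap_sub_logLikelihood {i j : Fin (2 * n)} (hi : i ∈ comA n)
    (hj : j ∈ comB n) (w : Edge n → Fin (L + 1)) :
    logLikelihood n L a b (truth n ∘ Equiv.swap i j) w - logLikelihood n L a b (truth n) w =
      S n L a b w i ((comB n).erase j) + S n L a b w j ((comA n).erase i)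
        - S n L a b w i ((comA n).erase i) - S n L a b w j ((comB n).erase j) := by
  rw [mem_comA] at hi
  rw [mem_comB] at hj
  have hij : i ≠ j := by rintro rfl; simp_all
  rw [logLikelihood_sub_logLikelihood hp hq, sum_lt_pairs_eq_of_support
      (fun k m => withinScore n L a b (truth n ∘ Equiv.swap i j) w k m
        - withinScore n L a b (truth n) w k m)
      (fun k m => by rw [withinScore_comm, withinScore_comm (truth n)])
      (fun k => by simp [withinScore]) hij (by simp [withinScore, hi, hj])
      (fun k m hki hkj hmi hmj => by
        simp [withinScore, Equiv.swap_apply_of_ne_of_ne, hki, hkj, hmi, hmj]),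
    Finset.sum_sub_distrib, Finset.sum_sub_distrib,
    sum_withinScore _ w i (H := (comB n).erase j), sum_withinScore _ w j (H := (comA n).erase i),
    sum_withinScore _ w i (H := (comA n).erase i), sum_withinScore _ w j (H := (comB n).erase j)]
  · ring
  all_goals
    intro m hm
    by_cases hmj : m = j <;> by_cases hmi : m = i <;>
      simp_all [Equiv.swap_apply_of_ne_of_ne, mem_comA, mem_comB]

end Likelihood

section Swap

variable {n L : ℕ} {a b : Fin L → ℝ}

lemma balanced_truth : balanced n (truth n) := by
  have hA : (Finset.univ.filter fun i => truth n i = true) = comA n := by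
    ext i
    simp [mem_comA]
  rw [balanced, hA, card_comA]

lemma balanced.comp_perm {σ : Fin (2 * n) → Bool} (hσ : balanced n σ)
    (π : Equiv.Perm (Fin (2 * n))) : balanced n (σ ∘ π) :=
  (Finset.card_equiv π (by simp)).trans hσ

lemma not_equivTruth_truth_comp_swap (hn : 2 ≤ n) {i j : Fin (2 * n)} (hi : i ∈ comA n)
    (hj : j ∈ comB n) : ¬ equivTruth n (truth n ∘ Equiv.swap i j) := by
  obtain ⟨k, hk, hki⟩ := Finset.exists_mem_ne (by rw [card_comA]; omega) i
  rw [mem_comA] at hi hk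
  rw [mem_comB] at hj
  have hkj : k ≠ j := by rintro rfl; simp_all
  rintro (h | h)
  · simpa [hi, hj] using congrFun h i
  · simpa [Equiv.swap_apply_of_ne_of_ne hki hkj, hk] using congrFun h k

lemma inter_subset_failEvent (hn : 2 ≤ n) (hp : ∀ ℓ, 0 < mass L a n ℓ)
    (hq : ∀ ℓ, 0 < mass L b n ℓ) {M : ℝ} (hM : ∀ ℓ, d n L a b ℓ ≤ M) :
    eventFA n L a b M ∩ eventFB n L a b M ⊆ failEvent n L a b := by
  rintro w ⟨⟨i, hi, hFi⟩, ⟨j, hj, hFj⟩⟩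
  have hij : i ≠ j := by rintro rfl; simp_all [mem_comA, mem_comB]
  refine ⟨truth n ∘ Equiv.swap i j, balanced_truth.comp_perm _,
    not_equivTruth_truth_comp_swap hn hi hj, ?_⟩
  rw [likelihood_lt_likelihood_iff hp hq, ← sub_pos,
    logLikelihood_swap_sub_logLikelihood hp hq hi hj]
  rw [S_eq_add_S_erase w hj hij.symm] at hFi
  rw [S_eq_add_S_erase w hi hij, wfun_comm] at hFj
  linarith [hM (wfun w i j)]

end Swap

lemma two_le_of_mem_eventFA {n L : ℕ} {a b : Fin L → ℝ} {M : ℝ}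
    (hM : ∀ ℓ, d n L a b ℓ ≤ M) {w : Edge n → Fin (L + 1)} (hw : w ∈ eventFA n L a b M) :
    2 ≤ n := by
  obtain ⟨i, hi, hlt⟩ := hw
  by_contra! hn
  have hn1 : n = 1 := by have := (Finset.mem_filter.1 hi).2; omega
  have hA : (comA n).erase i = ∅ := by
    rw [← Finset.card_eq_zero, Finset.card_erase_of_mem hi, card_comA, hn1]
  have hB : S n L a b w i (comB n) ≤ M := by
    have hiB : i ∉ comB n := by simp_all [mem_comA, mem_comB]
    calc S n L a b w i (comB n) ≤ (comB n).card • M := by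
          rw [S, Finset.erase_eq_of_notMem hiB]
          exact Finset.sum_le_card_nsmul _ _ _ fun m _ => hM _
      _ = M := by rw [card_comB, hn1, one_smul]
  have h0 : S n L a b w i ((comA n).erase i) = 0 := by simp [S, hA]
  linarith

theorem statement14_general (n L : ℕ) (a b : Fin L → ℝ)
    (ha : ∀ ℓ, 0 < a ℓ) (hb : ∀ ℓ, 0 < b ℓ)
    (hu : (∑ ℓ, a ℓ) * Real.log n < n) (hv : (∑ ℓ, b ℓ) * Real.log n < n)
    (M : ℝ) (hM : ∀ ℓ, d n L a b ℓ ≤ M)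
    (hFA : 2 / 3 ≤ (sbm n L a b (eventFA n L a b M)).toReal) :
    1 / 3 ≤ (sbm n L a b (failEvent n L a b)).toReal := by
  obtain ⟨w, hw⟩ : (eventFA n L a b M).Nonempty :=
    nonempty_of_measure_ne_zero (μ := sbm n L a b) fun h => by norm_num [h] at hFA
  have hn := two_le_of_mem_eventFA hM hw
  have hp := mass_pos ha hn hu
  have hq := mass_pos hb hn hv
  have := isProbabilityMeasure_sbm (fun ℓ => (hp ℓ).le) (fun ℓ => (hq ℓ).le)
  have hFB := congrArg ENNReal.toReal (sbm_eventFB (n := n) (a := a) (b := b) M)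
  set μ := sbm n L a b
  simp only [← measureReal_def] at hFA hFB ⊢
  calc 1 / 3 ≤ μ.real (eventFA n L a b M) + μ.real (eventFB n L a b M) - 1 := by linarith
    _ ≤ μ.real (eventFA n L a b M ∩ eventFB n L a b M) :=
        add_sub_one_le_measureReal_inter MeasurableSet.of_discrete
    _ ≤ μ.real (failEvent n L a b) := measureReal_mono (inter_subset_failEvent hn hp hq hM)

theorem statement14 (n L : ℕ) (hL : 1 ≤ L) (a b : Fin L → ℝ)
    (ha : ∀ ℓ, 0 < a ℓ) (hb : ∀ ℓ, 0 < b ℓ)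
    (hu : (∑ ℓ, a ℓ) * Real.log n < n) (hv : (∑ ℓ, b ℓ) * Real.log n < n)
    (M : ℝ) (hM : ∀ ℓ, d n L a b ℓ ≤ M)
    (hFA : 2 / 3 ≤ (sbm n L a b (eventFA n L a b M)).toReal) :
    1 / 3 ≤ (sbm n L a b (failEvent n L a b)).toReal :=
  statement14_general n L a b ha hb hu hv M hM hFA

end SBM14
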